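/- Let Ṽ : ℝ → ℝ be continuous with Ṽ(x) ≤ Ã for all x. Let (Ψ_k)_{k≥0} be C² functions with ∫ Ψ_k² dx = 1 satisfying ½Ψ_k″ + Ṽ Ψ_k = −λ_k Ψ_k, where (λ_k) is nondecreasing and ∑_{k≥0} e^{−λ_k t}(1 + λ_k²) < ∞ for every t > 0; assume the bounds |Ψ_k(x)| ≤ (e/π)^{1/4}(λ_k + Ã)^{1/4} for all k, x, and that there exist x* ∈ ℝ and constants A₁, A₂ ≥ 0 with |Ψ_k′(x*)| ≤ A₁ + A₂ λ_k for all k. Then p̃(t, x, y) := ∑_{k≥0} e^{−λ_k t} Ψ_k(x) Ψ_k(y) converges absolutely and uniformly on compact subsets of (0, ∞) × ℝ², p̃ is differentiable in t and twice continuously differentiable in y, with ∂_t p̃(t,x,y) = ∑_k (−λ_k) e^{−λ_k t} Ψ_k(x)Ψ_k(y) and ∂²_y p̃(t,x,y) = ∑_k e^{−λ_k t} Ψ_k(x)Ψ_k″(y), and p̃ satisfies the heat equation ∂_t p̃(t, x, y) = ½ ∂²_y p̃(t, x, y) + Ṽ(y) p̃(t, x, y) on (0, ∞) × ℝ². -/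

import Mathlib

open Real Filter

/-!
Write `w_k = 1 + λ_k²`. The bound on `Ψ_k` gives `|Ψ_k| ≤ c w_k`; the eigenvalue equation
`Ψ_k″ = -2 (λ_k + Ṽ) Ψ_k` then gives `|Ψ_k″| ≤ E w_k²` on each compact interval, and the mean
value theorem started from `x*` gives `|Ψ_k′| ≤ D w_k²` there. Splitting
`e^{-λ t} = e^{-λ t/2} e^{-λ t/2}` turns `∑ e^{-λ_k t} w_k < ∞` (for all `t > 0`) into
`∑ e^{-λ_k t} w_k^m < ∞` for every `m`, so all series in sight converge locally normally and can be
differentiated term by term. The heat equation is then the eigenvalue equation summed over `k`.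
-/

open Set Topology

section LocallyDominated

variable {𝕜 F : Type*} [RCLike 𝕜] [NormedAddCommGroup F]

/-- With `v` summable, this is local normal convergence of `∑ k, g k` on `s`. -/
def LocallyDominatedBy (g : ℕ → 𝕜 → F) (v : ℕ → ℝ) (s : Set 𝕜) : Prop :=
  ∀ y₀ ∈ s, ∃ D : ℝ, ∀ᶠ y in 𝓝 y₀, ∀ k, ‖g k y‖ ≤ D * v k

variable {g g' : ℕ → 𝕜 → F} {v : ℕ → ℝ} {s : Set 𝕜}

lemma LocallyDominatedBy.exists_ball (h : LocallyDominatedBy g v s) (hs : IsOpen s)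
    {y₀ : 𝕜} (hy₀ : y₀ ∈ s) :
    ∃ D : ℝ, ∃ ε > 0, Metric.ball y₀ ε ⊆ s ∧
      ∀ k, ∀ y ∈ Metric.ball y₀ ε, ‖g k y‖ ≤ D * v k := by
  obtain ⟨D, hD⟩ := h y₀ hy₀
  obtain ⟨ε, hε, hball⟩ := Metric.mem_nhds_iff.mp (inter_mem hD (hs.mem_nhds hy₀))
  exact ⟨D, ε, hε, fun y hy => (hball hy).2, fun k y hy => (hball hy).1 k⟩

lemma LocallyDominatedBy.summable [CompleteSpace F] (h : LocallyDominatedBy g v s)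
    (hv : Summable v) {y : 𝕜} (hy : y ∈ s) : Summable fun k => g k y := by
  obtain ⟨D, hD⟩ := h y hy
  exact .of_norm_bounded (hv.mul_left D) fun k => hD.self_of_nhds k

lemma LocallyDominatedBy.const_mul {g : ℕ → 𝕜 → 𝕜} (h : LocallyDominatedBy g v s)
    (a : ℕ → 𝕜) : LocallyDominatedBy (fun k y => a k * g k y) (fun k => ‖a k‖ * v k) s := by
  intro y₀ hy₀
  obtain ⟨D, hD⟩ := h y₀ hy₀
  refine ⟨D, hD.mono fun y hy k => ?_⟩
  calc ‖a k * g k y‖ = ‖a k‖ * ‖g k y‖ := norm_mul _ _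
    _ ≤ ‖a k‖ * (D * v k) := by gcongr; exact hy k
    _ = D * (‖a k‖ * v k) := by ring

lemma LocallyDominatedBy.hasDerivAt_tsum [NormedSpace 𝕜 F] [CompleteSpace F]
    (hg' : LocallyDominatedBy g' v s) (hv : Summable v) (hs : IsOpen s)
    (hg : ∀ k, ∀ y ∈ s, HasDerivAt (g k) (g' k y) y) {y : 𝕜} (hy : y ∈ s)
    (hsum : Summable fun k => g k y) :
    HasDerivAt (fun z => ∑' k, g k z) (∑' k, g' k y) y := by
  obtain ⟨D, ε, hε, hball, hD⟩ := hg'.exists_ball hs hy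
  exact hasDerivAt_tsum_of_isPreconnected (hv.mul_left D) Metric.isOpen_ball
    (convex_ball y ε).isPreconnected (fun k z hz => hg k z (hball hz)) hD
    (Metric.mem_ball_self hε) hsum (Metric.mem_ball_self hε)

lemma LocallyDominatedBy.continuousOn_tsum [CompleteSpace F] (hg : LocallyDominatedBy g v s)
    (hv : Summable v) (hs : IsOpen s) (hcont : ∀ k, ContinuousOn (g k) s) :
    ContinuousOn (fun y => ∑' k, g k y) s := by
  intro y hy
  obtain ⟨D, ε, hε, hball, hD⟩ := hg.exists_ball hs hy
  have hball_cont : ContinuousOn (fun y => ∑' k, g k y) (Metric.ball y ε) :=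
    _root_.continuousOn_tsum (fun k => (hcont k).mono hball) (hv.mul_left D) hD
  exact (hball_cont.continuousAt (Metric.ball_mem_nhds y hε)).continuousWithinAt

lemma contDiff_two_tsum_of_locallyDominatedBy [NormedSpace 𝕜 F] [CompleteSpace F]
    (hg : ∀ k, ContDiff 𝕜 2 (g k)) (hsum : ∀ y, Summable fun k => g k y) (hv : Summable v)
    (h₁ : LocallyDominatedBy (fun k => deriv (g k)) v univ)
    (h₂ : LocallyDominatedBy (fun k => deriv (deriv (g k))) v univ) :
    ContDiff 𝕜 2 (fun y => ∑' k, g k y) ∧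
      deriv (deriv fun y => ∑' k, g k y) = fun y => ∑' k, deriv (deriv (g k)) y := by
  have hd₁ : ∀ y, HasDerivAt (fun z => ∑' k, g k z) (∑' k, deriv (g k) y) y := fun y =>
    h₁.hasDerivAt_tsum hv isOpen_univ
      (fun k z _ => ((hg k).differentiable two_ne_zero z).hasDerivAt) (mem_univ y) (hsum y)
  have hd₂ : ∀ y, HasDerivAt (fun z => ∑' k, deriv (g k) z) (∑' k, deriv (deriv (g k)) y) y :=
    fun y => h₂.hasDerivAt_tsum hv isOpen_univ
      (fun k z _ => ((hg k).differentiable_deriv_two z).hasDerivAt) (mem_univ y)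
      (h₁.summable hv (mem_univ y))
  have e₁ : deriv (fun y => ∑' k, g k y) = fun y => ∑' k, deriv (g k) y :=
    funext fun y => (hd₁ y).deriv
  have e₂ : deriv (fun y => ∑' k, deriv (g k) y) = fun y => ∑' k, deriv (deriv (g k)) y :=
    funext fun y => (hd₂ y).deriv
  have hcont : Continuous fun y => ∑' k, deriv (deriv (g k)) y :=
    continuousOn_univ.mp <| h₂.continuousOn_tsum hv isOpen_univ fun k =>
      (((hg k).deriv' (n := 1)).continuous_deriv le_rfl).continuousOn
  refine ⟨(contDiff_succ_iff_deriv (n := 1)).mpr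
    ⟨fun y => (hd₁ y).differentiableAt, by simp, ?_⟩, by rw [e₁, e₂]⟩
  rw [e₁]
  exact contDiff_one_iff_deriv.mpr ⟨fun y => (hd₂ y).differentiableAt, e₂ ▸ hcont⟩

lemma contDiff_two_tsum_const_mul {g : ℕ → 𝕜 → 𝕜} (a : ℕ → 𝕜) (hg : ∀ k, ContDiff 𝕜 2 (g k))
    (hsum : ∀ y, Summable fun k => a k * g k y) (hv : Summable fun k => ‖a k‖ * v k)
    (h₁ : LocallyDominatedBy (fun k => deriv (g k)) v univ)
    (h₂ : LocallyDominatedBy (fun k => deriv (deriv (g k))) v univ) :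
    ContDiff 𝕜 2 (fun y => ∑' k, a k * g k y) ∧
      deriv (deriv fun y => ∑' k, a k * g k y) =
        fun y => ∑' k, a k * deriv (deriv (g k)) y := by
  have key := contDiff_two_tsum_of_locallyDominatedBy (g := fun k y => a k * g k y)
    (fun k => contDiff_const.mul (hg k)) hsum hv
  simp only [deriv_const_mul_field'] at key
  exact key (h₁.const_mul a) (h₂.const_mul a)

end LocallyDominated

lemma LocallyDominatedBy.of_Icc {g : ℕ → ℝ → ℝ} {v : ℕ → ℝ}
    (h : ∀ a b : ℝ, ∃ D, ∀ k, ∀ y ∈ Icc a b, |g k y| ≤ D * v k) :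
    LocallyDominatedBy g v univ := by
  intro y₀ _
  obtain ⟨D, hD⟩ := h (y₀ - 1) (y₀ + 1)
  exact ⟨D, mem_of_superset (Icc_mem_nhds (by linarith) (by linarith)) fun y hy k => hD k y hy⟩

lemma rpow_le_one_add_abs {p : ℝ} (hp₀ : 0 ≤ p) (hp₁ : p ≤ 1) (r : ℝ) : r ^ p ≤ 1 + |r| := by
  have h : r ^ p ≤ |r| ^ p := (le_abs_self _).trans (abs_rpow_le_abs_rpow r p)
  rcases le_total |r| 1 with hr | hr
  · linarith [Real.rpow_le_one (abs_nonneg r) hr hp₀, abs_nonneg r]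
  · have h₁ := Real.rpow_le_rpow_of_exponent_le hr hp₁
    rw [Real.rpow_one] at h₁
    linarith

lemma abs_le_one_add_sq (a : ℝ) : |a| ≤ 1 + a ^ 2 := by
  nlinarith [sq_nonneg (|a| - 1), sq_abs a, abs_nonneg a]

lemma rpow_add_le_mul_one_add_sq {p : ℝ} (hp₀ : 0 ≤ p) (hp₁ : p ≤ 1) (a A : ℝ) :
    (a + A) ^ p ≤ (2 + |A|) * (1 + a ^ 2) := by
  have h₁ := rpow_le_one_add_abs hp₀ hp₁ (a + A)
  nlinarith [abs_add_le a A, abs_le_one_add_sq a, abs_nonneg A, sq_nonneg a,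
    mul_nonneg (abs_nonneg A) (sq_nonneg a)]

lemma abs_neg_two_mul_add_mul_le {l V V₀ u c : ℝ} (hu : |u| ≤ c * (1 + l ^ 2))
    (hV : |V| ≤ V₀) : |-2 * (l + V) * u| ≤ 2 * c * (1 + V₀) * (1 + l ^ 2) ^ 2 := by
  have hcw : 0 ≤ c * (1 + l ^ 2) := (abs_nonneg _).trans hu
  have hV₀ : 0 ≤ 1 + V₀ := by linarith [(abs_nonneg _).trans hV]
  have hlV : |l + V| ≤ (1 + V₀) * (1 + l ^ 2) := by
    nlinarith [abs_add_le l V, abs_le_one_add_sq l, abs_nonneg V, sq_nonneg l]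
  calc |-2 * (l + V) * u| = 2 * |l + V| * |u| := by rw [abs_mul, abs_mul]; norm_num
    _ ≤ 2 * ((1 + V₀) * (1 + l ^ 2)) * (c * (1 + l ^ 2)) := by gcongr
    _ = 2 * c * (1 + V₀) * (1 + l ^ 2) ^ 2 := by ring

lemma exp_neg_mul_le_add_of_mem_Icc (l : ℝ) {a b τ : ℝ} (hτ : τ ∈ Icc a b) :
    exp (-(l * τ)) ≤ exp (-(l * a)) + exp (-(l * b)) := by
  rcases le_total 0 l with hl | hl
  · linarith [exp_le_exp.2 (by nlinarith [hτ.1] : -(l * τ) ≤ -(l * a)), exp_pos (-(l * b))]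
  · linarith [exp_le_exp.2 (by nlinarith [hτ.2] : -(l * τ) ≤ -(l * b)), exp_pos (-(l * a))]

lemma summable_exp_neg_mul_mul_pow {lam w : ℕ → ℝ} (hw : ∀ k, 0 ≤ w k)
    (h : ∀ t, 0 < t → Summable fun k => exp (-(lam k * t)) * w k) (m : ℕ) :
    ∀ t, 0 < t → Summable fun k => exp (-(lam k * t)) * w k ^ (m + 1) := by
  induction m with
  | zero => simpa only [zero_add, pow_one] using h
  | succ m ih =>
    intro t ht
    obtain ⟨D, hD⟩ := (h (t / 2) (half_pos ht)).tendsto_atTop_zero.bddAbove_range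
    refine .of_nonneg_of_le (fun k => by positivity [hw k]) (fun k => ?_)
      ((ih (t / 2) (half_pos ht)).mul_left D)
    have hsplit : exp (-(lam k * t)) = exp (-(lam k * (t / 2))) * exp (-(lam k * (t / 2))) := by
      rw [← exp_add]; ring_nf
    calc exp (-(lam k * t)) * w k ^ (m + 1 + 1)
        = (exp (-(lam k * (t / 2))) * w k) * (exp (-(lam k * (t / 2))) * w k ^ (m + 1)) := by
          rw [hsplit]; ring
      _ ≤ D * (exp (-(lam k * (t / 2))) * w k ^ (m + 1)) := by
          gcongr
          · exact mul_nonneg (exp_pos _).le (pow_nonneg (hw k) _)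
          · exact hD (mem_range_self k)

section Eigenfunctions

variable {Ψ : ℕ → ℝ → ℝ} {lam : ℕ → ℝ} {c : ℝ}

lemma exists_abs_deriv_deriv_le_on_Icc {Vt : ℝ → ℝ} (hVc : Continuous Vt)
    (hΨc : ∀ k y, |Ψ k y| ≤ c * (1 + lam k ^ 2))
    (hΨ'' : ∀ k y, deriv (deriv (Ψ k)) y = -2 * (lam k + Vt y) * Ψ k y) (a b : ℝ) :
    ∃ E, ∀ k, ∀ y ∈ Icc a b, |deriv (deriv (Ψ k)) y| ≤ E * (1 + lam k ^ 2) ^ 2 := by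
  obtain ⟨V₀, hV₀⟩ := isCompact_Icc.exists_bound_of_continuousOn hVc.continuousOn (s := Icc a b)
  refine ⟨2 * c * (1 + V₀), fun k y hy => ?_⟩
  rw [hΨ'']
  exact abs_neg_two_mul_add_mul_le (hΨc k y) (hV₀ y hy)

lemma exists_abs_deriv_le_on_Icc (hΨ : ∀ k, ContDiff ℝ 2 (Ψ k)) {xstar A₁ A₂ : ℝ}
    (hderiv : ∀ k, |deriv (Ψ k) xstar| ≤ A₁ + A₂ * lam k)
    (h₂ : ∀ a b, ∃ E, ∀ k, ∀ y ∈ Icc a b, |deriv (deriv (Ψ k)) y| ≤ E * (1 + lam k ^ 2) ^ 2)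
    (a b : ℝ) : ∃ D, ∀ k, ∀ y ∈ Icc a b, |deriv (Ψ k) y| ≤ D * (1 + lam k ^ 2) ^ 2 := by
  set L := max b xstar - min a xstar
  obtain ⟨E, hE⟩ := h₂ (min a xstar) (max b xstar)
  have hx : xstar ∈ Icc (min a xstar) (max b xstar) := ⟨min_le_right _ _, le_max_right _ _⟩
  refine ⟨|A₁| + |A₂| + E * L, fun k y hy => ?_⟩
  have hy' : y ∈ Icc (min a xstar) (max b xstar) :=
    ⟨(min_le_left _ _).trans hy.1, hy.2.trans (le_max_left _ _)⟩
  have hmvt : |deriv (Ψ k) y - deriv (Ψ k) xstar| ≤ E * (1 + lam k ^ 2) ^ 2 * |y - xstar| :=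
    (convex_Icc _ _).norm_image_sub_le_of_norm_deriv_le
      (fun z _ => (hΨ k).differentiable_deriv_two z) (hE k) hx hy'
  have hE₀ : 0 ≤ E * (1 + lam k ^ 2) ^ 2 := (abs_nonneg _).trans (hE k xstar hx)
  have hdist : |y - xstar| ≤ L :=
    abs_sub_le_iff.2 ⟨by linarith [hy'.2, hx.1], by linarith [hy'.1, hx.2]⟩
  have hA : A₁ + A₂ * lam k ≤ (|A₁| + |A₂|) * (1 + lam k ^ 2) ^ 2 := by
    have hw : 1 + lam k ^ 2 ≤ (1 + lam k ^ 2) ^ 2 := by nlinarith [sq_nonneg (lam k)]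
    have := mul_le_mul_of_nonneg_left (abs_le_one_add_sq (lam k)) (abs_nonneg A₂)
    nlinarith [le_abs_self A₁, le_abs_self (A₂ * lam k), abs_mul A₂ (lam k), abs_nonneg A₁,
      abs_nonneg A₂, sq_nonneg (lam k)]
  calc |deriv (Ψ k) y| ≤ |deriv (Ψ k) xstar| + |deriv (Ψ k) y - deriv (Ψ k) xstar| := by
        linarith [abs_sub_abs_le_abs_sub (deriv (Ψ k) y) (deriv (Ψ k) xstar)]
    _ ≤ (|A₁| + |A₂|) * (1 + lam k ^ 2) ^ 2 + E * (1 + lam k ^ 2) ^ 2 * L := by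
        gcongr
        · exact (hderiv k).trans hA
        · exact hmvt.trans (mul_le_mul_of_nonneg_left hdist hE₀)
    _ = (|A₁| + |A₂| + E * L) * (1 + lam k ^ 2) ^ 2 := by ring

lemma abs_mul_mul_le_of_abs_le (hΨc : ∀ k y, |Ψ k y| ≤ c * (1 + lam k ^ 2)) (r : ℝ) (k : ℕ)
    (x y : ℝ) : |r * Ψ k x * Ψ k y| ≤ c ^ 2 * (|r| * (1 + lam k ^ 2) ^ 2) := by
  have hcw : 0 ≤ c * (1 + lam k ^ 2) := (abs_nonneg _).trans (hΨc k x)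
  rw [abs_mul, abs_mul]
  calc |r| * |Ψ k x| * |Ψ k y| ≤ |r| * (c * (1 + lam k ^ 2)) * (c * (1 + lam k ^ 2)) := by
        gcongr
        exacts [hΨc k x, hΨc k y]
    _ = c ^ 2 * (|r| * (1 + lam k ^ 2) ^ 2) := by ring

lemma summable_exp_mul_mul (hΨc : ∀ k y, |Ψ k y| ≤ c * (1 + lam k ^ 2))
    (hsum₂ : ∀ t, 0 < t → Summable fun k => exp (-(lam k * t)) * (1 + lam k ^ 2) ^ 2)
    {t : ℝ} (ht : 0 < t) (x y : ℝ) :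
    Summable fun k => exp (-(lam k * t)) * Ψ k x * Ψ k y :=
  .of_norm_bounded ((hsum₂ t ht).mul_left (c ^ 2)) fun k => by
    simpa only [Real.norm_eq_abs, abs_exp] using
      abs_mul_mul_le_of_abs_le hΨc (exp (-(lam k * t))) k x y

lemma summable_abs_exp_mul_mul_sq (hΨc : ∀ k y, |Ψ k y| ≤ c * (1 + lam k ^ 2))
    (hsum₃ : ∀ t, 0 < t → Summable fun k => exp (-(lam k * t)) * (1 + lam k ^ 2) ^ 3)
    {t : ℝ} (ht : 0 < t) (x : ℝ) :
    Summable fun k => |exp (-(lam k * t)) * Ψ k x| * (1 + lam k ^ 2) ^ 2 := by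
  refine .of_nonneg_of_le (fun k => by positivity) (fun k => ?_) ((hsum₃ t ht).mul_left c)
  calc |exp (-(lam k * t)) * Ψ k x| * (1 + lam k ^ 2) ^ 2
      ≤ exp (-(lam k * t)) * (c * (1 + lam k ^ 2)) * (1 + lam k ^ 2) ^ 2 := by
        rw [abs_mul, abs_exp]
        gcongr
        exact hΨc k x
    _ = c * (exp (-(lam k * t)) * (1 + lam k ^ 2) ^ 3) := by ring

lemma tendstoUniformlyOn_tsum_exp_mul_mul (hΨc : ∀ k y, |Ψ k y| ≤ c * (1 + lam k ^ 2))
    (hsum₂ : ∀ t, 0 < t → Summable fun k => exp (-(lam k * t)) * (1 + lam k ^ 2) ^ 2)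
    {K : Set (ℝ × ℝ × ℝ)} (hK : IsCompact K) (hKpos : K ⊆ {q | 0 < q.1}) :
    TendstoUniformlyOn
      (fun n q => ∑ k ∈ Finset.range n, exp (-(lam k * q.1)) * Ψ k q.2.1 * Ψ k q.2.2)
      (fun q => ∑' k, exp (-(lam k * q.1)) * Ψ k q.2.1 * Ψ k q.2.2) atTop K := by
  rcases K.eq_empty_or_nonempty with rfl | hne
  · exact tendstoUniformlyOn_empty
  obtain ⟨q₀, hq₀, hmin⟩ := hK.exists_isMinOn hne continuous_fst.continuousOn
  obtain ⟨q₁, hq₁, hmax⟩ := hK.exists_isMaxOn hne continuous_fst.continuousOn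
  refine tendstoUniformlyOn_tsum_nat
    (((hsum₂ _ (hKpos hq₀)).add (hsum₂ _ (hKpos hq₁))).mul_left (c ^ 2)) fun k q hq => ?_
  calc ‖exp (-(lam k * q.1)) * Ψ k q.2.1 * Ψ k q.2.2‖
      ≤ c ^ 2 * (exp (-(lam k * q.1)) * (1 + lam k ^ 2) ^ 2) := by
        simpa only [Real.norm_eq_abs, abs_exp] using
          abs_mul_mul_le_of_abs_le hΨc (exp (-(lam k * q.1))) k q.2.1 q.2.2
    _ ≤ c ^ 2 * ((exp (-(lam k * q₀.1)) + exp (-(lam k * q₁.1))) * (1 + lam k ^ 2) ^ 2) := by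
        gcongr
        exact exp_neg_mul_le_add_of_mem_Icc (lam k) ⟨hmin hq, hmax hq⟩
    _ = _ := by ring

lemma hasDerivAt_tsum_exp_mul_mul (hΨc : ∀ k y, |Ψ k y| ≤ c * (1 + lam k ^ 2))
    (hsum₂ : ∀ t, 0 < t → Summable fun k => exp (-(lam k * t)) * (1 + lam k ^ 2) ^ 2)
    (hsum₃ : ∀ t, 0 < t → Summable fun k => exp (-(lam k * t)) * (1 + lam k ^ 2) ^ 3)
    {t : ℝ} (ht : 0 < t) (x y : ℝ) :
    HasDerivAt (fun τ => ∑' k, exp (-(lam k * τ)) * Ψ k x * Ψ k y)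
      (∑' k, -lam k * exp (-(lam k * t)) * Ψ k x * Ψ k y) t := by
  have hterm : ∀ k τ, HasDerivAt (fun τ => exp (-(lam k * τ)) * Ψ k x * Ψ k y)
      (-lam k * exp (-(lam k * τ)) * Ψ k x * Ψ k y) τ := fun k τ =>
    ((((hasDerivAt_id' τ).const_mul (lam k)).fun_neg.exp.mul_const (Ψ k x)).mul_const
      (Ψ k y)).congr_deriv (by ring)
  refine hasDerivAt_tsum_of_isPreconnected
    (((hsum₃ (t / 2) (by positivity)).add (hsum₃ (2 * t) (by positivity))).mul_left (c ^ 2))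
    isOpen_Ioo isPreconnected_Ioo (fun k τ _ => hterm k τ) (fun k τ hτ => ?_)
    (⟨by linarith, by linarith⟩ : t ∈ Ioo (t / 2) (2 * t)) (summable_exp_mul_mul hΨc hsum₂ ht x y)
    ⟨by linarith, by linarith⟩
  calc ‖-lam k * exp (-(lam k * τ)) * Ψ k x * Ψ k y‖
      ≤ c ^ 2 * (|lam k| * exp (-(lam k * τ)) * (1 + lam k ^ 2) ^ 2) := by
        simpa only [Real.norm_eq_abs, abs_mul, abs_neg, abs_exp] using
          abs_mul_mul_le_of_abs_le hΨc (-lam k * exp (-(lam k * τ))) k x y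
    _ ≤ c ^ 2 * ((1 + lam k ^ 2) * (exp (-(lam k * (t / 2))) + exp (-(lam k * (2 * t)))) *
          (1 + lam k ^ 2) ^ 2) := by
        gcongr
        · exact abs_le_one_add_sq (lam k)
        · exact exp_neg_mul_le_add_of_mem_Icc (lam k) ⟨hτ.1.le, hτ.2.le⟩
    _ = _ := by ring

end Eigenfunctions

theorem density_solves_heat_equation_general
    (Vt : ℝ → ℝ) (Atil : ℝ) (hVc : Continuous Vt)
    (Ψ : ℕ → ℝ → ℝ) (lam : ℕ → ℝ)
    (hΨ : ∀ k, ContDiff ℝ 2 (Ψ k))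
    (heigen : ∀ (k : ℕ) (x : ℝ),
      (1 / 2) * deriv (deriv (Ψ k)) x + Vt x * Ψ k x = -lam k * Ψ k x)
    (hsumm : ∀ t : ℝ, 0 < t →
      Summable fun k : ℕ => Real.exp (-(lam k * t)) * (1 + (lam k) ^ 2))
    (hbound : ∀ (k : ℕ) (x : ℝ),
      |Ψ k x| ≤ (Real.exp 1 / Real.pi) ^ ((1 : ℝ) / 4) * (lam k + Atil) ^ ((1 : ℝ) / 4))
    (xstar A₁ A₂ : ℝ)
    (hderiv : ∀ k : ℕ, |deriv (Ψ k) xstar| ≤ A₁ + A₂ * lam k) :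
    -- absolute convergence ...
    (∀ t : ℝ, 0 < t → ∀ x y : ℝ,
      Summable fun k : ℕ => Real.exp (-(lam k * t)) * |Ψ k x| * |Ψ k y|) ∧
    -- ... and uniform convergence on compact subsets of (0,∞) × ℝ²
    (∀ K : Set (ℝ × ℝ × ℝ), IsCompact K → K ⊆ {q : ℝ × ℝ × ℝ | 0 < q.1} →
      TendstoUniformlyOn
        (fun n q => ∑ k ∈ Finset.range n,
          Real.exp (-(lam k * q.1)) * Ψ k q.2.1 * Ψ k q.2.2)
        (fun q => ∑' k, Real.exp (-(lam k * q.1)) * Ψ k q.2.1 * Ψ k q.2.2)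
        atTop K) ∧
    -- differentiability in t with term by term derivative
    (∀ t : ℝ, 0 < t → ∀ x y : ℝ,
      HasDerivAt (fun τ => ∑' k, Real.exp (-(lam k * τ)) * Ψ k x * Ψ k y)
        (∑' k, -lam k * Real.exp (-(lam k * t)) * Ψ k x * Ψ k y) t) ∧
    -- twice continuous differentiability in y with term by term second derivative
    (∀ t : ℝ, 0 < t → ∀ x : ℝ,
      ContDiff ℝ 2 (fun y => ∑' k, Real.exp (-(lam k * t)) * Ψ k x * Ψ k y)) ∧
    (∀ t : ℝ, 0 < t → ∀ x y : ℝ,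
      deriv (deriv (fun y' => ∑' k, Real.exp (-(lam k * t)) * Ψ k x * Ψ k y')) y =
        ∑' k, Real.exp (-(lam k * t)) * Ψ k x * deriv (deriv (Ψ k)) y) ∧
    -- the heat equation ∂ₜ p̃ = ½ ∂²_y p̃ + Ṽ(y) p̃
    (∀ t : ℝ, 0 < t → ∀ x y : ℝ,
      deriv (fun τ => ∑' k, Real.exp (-(lam k * τ)) * Ψ k x * Ψ k y) t =
        (1 / 2) * deriv (deriv (fun y' => ∑' k, Real.exp (-(lam k * t)) * Ψ k x * Ψ k y')) y +
          Vt y * ∑' k, Real.exp (-(lam k * t)) * Ψ k x * Ψ k y) := by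
  have hΨc : ∀ k y, |Ψ k y| ≤ (exp 1 / π) ^ ((1 : ℝ) / 4) * (2 + |Atil|) * (1 + lam k ^ 2) :=
    fun k y => (hbound k y).trans <| (mul_le_mul_of_nonneg_left (rpow_add_le_mul_one_add_sq
      (by norm_num) (by norm_num) (lam k) Atil) (by positivity)).trans_eq (mul_assoc _ _ _).symm
  have hsum₂ := summable_exp_neg_mul_mul_pow (fun k => by positivity) hsumm 1
  have hsum₃ := summable_exp_neg_mul_mul_pow (fun k => by positivity) hsumm 2
  have hΨ'' : ∀ k y, deriv (deriv (Ψ k)) y = -2 * (lam k + Vt y) * Ψ k y := fun k y => by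
    linarith [heigen k y]
  have h₂ := exists_abs_deriv_deriv_le_on_Icc hVc hΨc hΨ''
  have hspace := fun t (ht : 0 < t) x =>
    contDiff_two_tsum_const_mul (fun k => exp (-(lam k * t)) * Ψ k x) hΨ
      (summable_exp_mul_mul hΨc hsum₂ ht x) (summable_abs_exp_mul_mul_sq hΨc hsum₃ ht x)
      (.of_Icc (exists_abs_deriv_le_on_Icc hΨ hderiv h₂)) (.of_Icc h₂)
  refine ⟨fun t ht x y => ?_,
    fun K hK hKpos => tendstoUniformlyOn_tsum_exp_mul_mul hΨc hsum₂ hK hKpos,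
    fun t ht x y => hasDerivAt_tsum_exp_mul_mul hΨc hsum₂ hsum₃ ht x y,
    fun t ht x => (hspace t ht x).1, fun t ht x y => congrFun (hspace t ht x).2 y,
    fun t ht x y => ?_⟩
  · exact (summable_exp_mul_mul hΨc hsum₂ ht x y).abs.congr fun k => by
      rw [abs_mul, abs_mul, abs_exp]
  · rw [(hasDerivAt_tsum_exp_mul_mul hΨc hsum₂ hsum₃ ht x y).deriv, (hspace t ht x).2,
      ← tsum_mul_left, ← tsum_mul_left, ← Summable.tsum_add]
    · congr 1 with k
      linear_combination (-(exp (-(lam k * t)) * Ψ k x)) * heigen k y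
    · exact (((LocallyDominatedBy.of_Icc h₂).const_mul _).summable
        (summable_abs_exp_mul_mul_sq hΨc hsum₃ ht x) (mem_univ y)).mul_left _
    · exact (summable_exp_mul_mul hΨc hsum₂ ht x y).mul_left _

/-- Appendix A: the eigenfunction expansion
`p̃(t,x,y) = ∑ e^{-λ_k t}Ψ_k(x)Ψ_k(y)` converges uniformly (and absolutely) on compact subsets of
`(0,∞) × ℝ²`, is differentiable in `t` and twice continuously differentiable in `y`, with the term
by term derivatives, and solves the heat equation `∂ₜp̃ = ½∂²_y p̃ + Ṽ(y)p̃`. -/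
theorem density_solves_heat_equation
    (Vt : ℝ → ℝ) (Atil : ℝ) (hVc : Continuous Vt) (hVb : ∀ x, Vt x ≤ Atil)
    (Ψ : ℕ → ℝ → ℝ) (lam : ℕ → ℝ) (hmono : Monotone lam)
    (hΨ : ∀ k, ContDiff ℝ 2 (Ψ k))
    (hnorm : ∀ k, (∫ x : ℝ, (Ψ k x) ^ 2) = 1)
    (heigen : ∀ (k : ℕ) (x : ℝ),
      (1 / 2) * deriv (deriv (Ψ k)) x + Vt x * Ψ k x = -lam k * Ψ k x)
    (hsumm : ∀ t : ℝ, 0 < t →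
      Summable fun k : ℕ => Real.exp (-(lam k * t)) * (1 + (lam k) ^ 2))
    (hbound : ∀ (k : ℕ) (x : ℝ),
      |Ψ k x| ≤ (Real.exp 1 / Real.pi) ^ ((1 : ℝ) / 4) * (lam k + Atil) ^ ((1 : ℝ) / 4))
    (xstar A₁ A₂ : ℝ) (hA₁ : 0 ≤ A₁) (hA₂ : 0 ≤ A₂)
    (hderiv : ∀ k : ℕ, |deriv (Ψ k) xstar| ≤ A₁ + A₂ * lam k) :
    -- absolute convergence ...
    (∀ t : ℝ, 0 < t → ∀ x y : ℝ,
      Summable fun k : ℕ => Real.exp (-(lam k * t)) * |Ψ k x| * |Ψ k y|) ∧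
    -- ... and uniform convergence on compact subsets of (0,∞) × ℝ²
    (∀ K : Set (ℝ × ℝ × ℝ), IsCompact K → K ⊆ {q : ℝ × ℝ × ℝ | 0 < q.1} →
      TendstoUniformlyOn
        (fun n q => ∑ k ∈ Finset.range n,
          Real.exp (-(lam k * q.1)) * Ψ k q.2.1 * Ψ k q.2.2)
        (fun q => ∑' k, Real.exp (-(lam k * q.1)) * Ψ k q.2.1 * Ψ k q.2.2)
        atTop K) ∧
    -- differentiability in t with term by term derivative
    (∀ t : ℝ, 0 < t → ∀ x y : ℝ,
      HasDerivAt (fun τ => ∑' k, Real.exp (-(lam k * τ)) * Ψ k x * Ψ k y)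
        (∑' k, -lam k * Real.exp (-(lam k * t)) * Ψ k x * Ψ k y) t) ∧
    -- twice continuous differentiability in y with term by term second derivative
    (∀ t : ℝ, 0 < t → ∀ x : ℝ,
      ContDiff ℝ 2 (fun y => ∑' k, Real.exp (-(lam k * t)) * Ψ k x * Ψ k y)) ∧
    (∀ t : ℝ, 0 < t → ∀ x y : ℝ,
      deriv (deriv (fun y' => ∑' k, Real.exp (-(lam k * t)) * Ψ k x * Ψ k y')) y =
        ∑' k, Real.exp (-(lam k * t)) * Ψ k x * deriv (deriv (Ψ k)) y) ∧
    -- the heat equation ∂ₜ p̃ = ½ ∂²_y p̃ + Ṽ(y) p̃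
    (∀ t : ℝ, 0 < t → ∀ x y : ℝ,
      deriv (fun τ => ∑' k, Real.exp (-(lam k * τ)) * Ψ k x * Ψ k y) t =
        (1 / 2) * deriv (deriv (fun y' => ∑' k, Real.exp (-(lam k * t)) * Ψ k x * Ψ k y')) y +
          Vt y * ∑' k, Real.exp (-(lam k * t)) * Ψ k x * Ψ k y) :=
  density_solves_heat_equation_general Vt Atil hVc Ψ lam hΨ heigen hsumm hbound xstar A₁ A₂ hderiv
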